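/- arXiv:1606.07031 — 10 statements merged into one kernel-verified Lean document; each statement's English description precedes it below -/
import Mathlib

section
/- Let G be a group. Then G satisfies condition (2) if and only if G satisfies condition (2)'. That is: (for all g, h in G there exists a positive integer n with g·hⁿ = hⁿ·g) if and only if (for all g, h in G there exist positive integers m, n with g·hᵐ = hⁿ·g). -/
/-!
Only an element `h` of infinite order needs care. If `g h^m g⁻¹ = h^n` and `h g^s h⁻¹ = g^t`, then
conjugation by `g^t` sends `h^(m^s) ↦ h^(n^s)` and `h^(m^t) ↦ h^(n^t)`; comparing the images of
`h^(m^s m^t)` gives `m^s n^t = n^s m^t`, which forces `m = n` when `s ≠ t`. When `s = t`, the power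
`g^s` commutes with `h` and sends `h^(m^s) ↦ h^(n^s)`, so already `m^s = n^s`.
-/

theorem Nat.eq_of_pow_mul_pow_eq_pow_mul_pow {m n s t : ℕ} (hm : 0 < m) (hn : 0 < n) (hst : s ≠ t)
    (h : m ^ s * n ^ t = n ^ s * m ^ t) : m = n := by
  wlog hlt : s < t generalizing s t
  · exact this hst.symm (by linarith) (by omega)
  obtain ⟨d, rfl⟩ := Nat.exists_eq_add_of_lt hlt
  have hd : n ^ (d + 1) = m ^ (d + 1) := by
    refine Nat.eq_of_mul_eq_mul_left (show 0 < m ^ s * n ^ s by positivity) ?_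
    calc m ^ s * n ^ s * n ^ (d + 1) = m ^ s * n ^ (s + d + 1) := by ring
      _ = n ^ s * m ^ (s + d + 1) := h
      _ = m ^ s * n ^ s * m ^ (d + 1) := by ring
  exact (Nat.pow_left_injective d.succ_ne_zero hd).symm

namespace SemiconjBy

variable {G : Type*} [Group G]

theorem conj_of_commute {c x u v : G} (hx : SemiconjBy x u v) (hu : Commute c u)
    (hv : Commute c v) : SemiconjBy (c * x * c⁻¹) u v :=
  (SemiconjBy.mul_left hv hx).mul_left hu.inv_left

theorem pow_left_pow_pow {g h : G} {m n : ℕ} (hgh : SemiconjBy g (h ^ m) (h ^ n)) (k : ℕ) :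
    SemiconjBy (g ^ k) (h ^ m ^ k) (h ^ n ^ k) := by
  induction k with
  | zero => simp
  | succ k ih =>
    have hg : SemiconjBy g (h ^ (n ^ k * m)) (h ^ (n * n ^ k)) := by
      rw [mul_comm, pow_mul, pow_mul]; exact hgh.pow_right _
    have hgk : SemiconjBy (g ^ k) (h ^ (m ^ k * m)) (h ^ (n ^ k * m)) := by
      rw [pow_mul, pow_mul]; exact ih.pow_right m
    rw [pow_succ', pow_succ m, pow_succ' n]
    exact hg.mul_left hgk

theorem mul_eq_mul_of_not_isOfFinOrder {x h : G} (hh : ¬IsOfFinOrder h) {a b c d : ℕ}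
    (hab : SemiconjBy x (h ^ a) (h ^ b)) (hcd : SemiconjBy x (h ^ c) (h ^ d)) :
    b * c = d * a := by
  have hac : SemiconjBy x (h ^ (a * c)) (h ^ (b * c)) := by
    simpa only [pow_mul] using hab.pow_right c
  have hca : SemiconjBy x (h ^ (c * a)) (h ^ (d * a)) := by
    simpa only [pow_mul] using hcd.pow_right a
  rw [mul_comm c a] at hca
  exact injective_pow_iff_not_isOfFinOrder.mpr hh (mul_right_cancel (hac.eq.symm.trans hca.eq))

end SemiconjBy

theorem pow_exponents_eq_of_not_isOfFinOrder {G : Type*} [Group G] {g h : G}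
    (hh : ¬IsOfFinOrder h) {m n s t : ℕ} (hm : 0 < m) (hn : 0 < n) (hs : 0 < s)
    (hgh : SemiconjBy g (h ^ m) (h ^ n)) (hhg : SemiconjBy h (g ^ s) (g ^ t)) : m = n := by
  have hs_iter := hgh.pow_left_pow_pow s
  by_cases hst : s = t
  · subst hst
    have hcomm : SemiconjBy (g ^ s) (h ^ 1) (h ^ 1) := by
      rw [pow_one]; exact Commute.symm hhg
    have := hs_iter.mul_eq_mul_of_not_isOfFinOrder hh hcomm
    exact Nat.pow_left_injective hs.ne' (by simpa using this.symm)
  · have hgt : g ^ t = h * g ^ s * h⁻¹ := eq_mul_inv_of_mul_eq hhg.eq.symm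
    have hts : SemiconjBy (g ^ t) (h ^ m ^ s) (h ^ n ^ s) :=
      hgt ▸ hs_iter.conj_of_commute (Commute.self_pow h _) (Commute.self_pow h _)
    have := hts.mul_eq_mul_of_not_isOfFinOrder hh (hgh.pow_left_pow_pow t)
    exact Nat.eq_of_pow_mul_pow_eq_pow_mul_pow hm hn hst (by linarith)

theorem cond2_iff_cond2' (G : Type*) [Group G] :
    (∀ g h : G, ∃ n : ℕ, 0 < n ∧ g * h ^ n = h ^ n * g) ↔
    (∀ g h : G, ∃ m n : ℕ, 0 < m ∧ 0 < n ∧ g * h ^ m = h ^ n * g) := by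
  refine ⟨fun H g h ↦ ?_, fun H g h ↦ ?_⟩
  · obtain ⟨n, hn, hgh⟩ := H g h
    exact ⟨n, n, hn, hn, hgh⟩
  by_cases hh : IsOfFinOrder h
  · exact ⟨orderOf h, hh.orderOf_pos, by rw [pow_orderOf_eq_one, mul_one, one_mul]⟩
  obtain ⟨m, n, hm, hn, hgh⟩ := H g h
  obtain ⟨s, t, hs, -, hhg⟩ := H h g
  obtain rfl := pow_exponents_eq_of_not_isOfFinOrder hh hm hn hs hgh hhg
  exact ⟨m, hm, hgh⟩
end

section
/- Let G be a group and let g, h ∈ G with h of infinite order. Suppose k, l, m, n are positive integers such that h·g^k·h⁻¹ = g^l and g·h^m·g⁻¹ = h^n. Then m = n (and consequently g·h^m·g⁻¹ = h^m, i.e., g commutes with h^m). -/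
/-!
Iterating `g h^m g⁻¹ = h^n` gives `g^j h^(m^j) g^(-j) = h^(n^j)`. As `h g^k h⁻¹ = g^l` and
conjugation by `h` fixes the powers of `h`, the case `j = l` turns into
`g^k h^(m^l) g^(-k) = h^(n^l)`, and the case `j = k` reads `g^k h^(m^k) g^(-k) = h^(n^k)`.
Conjugating `h^(m^k m^l)` by `g^k` in two ways, infinite order of `h` gives
`n^l m^k = n^k m^l`, which forces `m = n` when `k ≠ l`. When `k = l`, `g^k` commutes with `h`,
so `m^k = n^k` directly.
-/

theorem Nat.eq_of_pow_mul_pow_eq {k l m n : ℕ} (hkl : k ≠ l) (hm : 0 < m) (hn : 0 < n)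
    (h : n ^ l * m ^ k = n ^ k * m ^ l) : m = n := by
  wlog hlt : k < l generalizing k l
  · exact this hkl.symm (by linarith) (lt_of_le_of_ne (not_lt.mp hlt) hkl.symm)
  obtain ⟨d, rfl⟩ := Nat.exists_eq_add_of_lt hlt
  have hcancel : m ^ (d + 1) * (m ^ k * n ^ k) = n ^ (d + 1) * (m ^ k * n ^ k) :=
    calc m ^ (d + 1) * (m ^ k * n ^ k) = n ^ k * m ^ (k + d + 1) := by ring
      _ = n ^ (k + d + 1) * m ^ k := h.symm
      _ = n ^ (d + 1) * (m ^ k * n ^ k) := by ring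
  exact Nat.pow_left_injective d.succ_ne_zero
    (Nat.eq_of_mul_eq_mul_right (by positivity) hcancel)

section Conjugation

variable {G : Type*} [Group G]

theorem conj_pow_pow_of_conj_pow {g x : G} {m n : ℕ} (h : g * x ^ m * g⁻¹ = x ^ n) (j : ℕ) :
    g ^ j * x ^ (m ^ j) * (g ^ j)⁻¹ = x ^ (n ^ j) := by
  induction j with
  | zero => simp
  | succ j ih =>
    calc g ^ (j + 1) * x ^ (m ^ (j + 1)) * (g ^ (j + 1))⁻¹
        = g ^ j * (g * x ^ m * g⁻¹) ^ (m ^ j) * (g ^ j)⁻¹ := by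
          rw [conj_pow, ← pow_mul, pow_succ, pow_succ, mul_comm (m ^ j)]; group
      _ = x ^ (n ^ (j + 1)) := by
          rw [h, ← pow_mul, mul_comm, pow_mul, ← conj_pow, ih, ← pow_mul, pow_succ]

theorem conj_pow_of_conj_eq {h c d : G} {p q : ℕ} (hc : h * c * h⁻¹ = d)
    (hd : d * h ^ p * d⁻¹ = h ^ q) : c * h ^ p * c⁻¹ = h ^ q := by
  subst hc
  calc c * h ^ p * c⁻¹ = h⁻¹ * ((h * c * h⁻¹) * h ^ p * (h * c * h⁻¹)⁻¹) * h := by group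
    _ = h ^ q := by rw [hd]; group

theorem mul_eq_mul_of_conj_pow {x c : G} (hx : ¬IsOfFinOrder x) {p q r s : ℕ}
    (hpq : c * x ^ p * c⁻¹ = x ^ q) (hrs : c * x ^ r * c⁻¹ = x ^ s) : q * r = s * p := by
  apply injective_pow_iff_not_isOfFinOrder.mpr hx
  calc x ^ (q * r) = c * x ^ (p * r) * c⁻¹ := by rw [pow_mul, ← hpq, conj_pow, pow_mul]
    _ = x ^ (s * p) := by rw [mul_comm, pow_mul, ← conj_pow, hrs, pow_mul]

end Conjugation

theorem eq_of_conj_pow_general (G : Type*) [Group G] (g h : G) (hh : ¬ IsOfFinOrder h)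
    (k l m n : ℕ) (hk : 0 < k) (hm : 0 < m) (hn : 0 < n)
    (h1 : h * g ^ k * h⁻¹ = g ^ l) (h2 : g * h ^ m * g⁻¹ = h ^ n) :
    m = n ∧ g * h ^ m * g⁻¹ = h ^ m := by
  have hg := conj_pow_pow_of_conj_pow h2
  have hmn : m = n := by
    rcases eq_or_ne k l with rfl | hkl
    · have hcomm : Commute h (g ^ k) := by rwa [mul_inv_eq_iff_eq_mul] at h1
      have hfix : g ^ k * h ^ 1 * (g ^ k)⁻¹ = h ^ 1 := by
        rw [pow_one, hcomm.symm.eq, mul_inv_cancel_right]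
      exact Nat.pow_left_injective hk.ne' (by simpa using mul_eq_mul_of_conj_pow hh hfix (hg k))
    · exact Nat.eq_of_pow_mul_pow_eq hkl hm hn
        (mul_eq_mul_of_conj_pow hh (conj_pow_of_conj_eq h1 (hg l)) (hg k))
  exact ⟨hmn, hmn ▸ h2⟩

theorem eq_of_conj_pow (G : Type*) [Group G] (g h : G) (hh : ¬ IsOfFinOrder h)
    (k l m n : ℕ) (hk : 0 < k) (hl : 0 < l) (hm : 0 < m) (hn : 0 < n)
    (h1 : h * g ^ k * h⁻¹ = g ^ l) (h2 : g * h ^ m * g⁻¹ = h ^ n) :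
    m = n ∧ g * h ^ m * g⁻¹ = h ^ m :=
  eq_of_conj_pow_general G g h hh k l m n hk hm hn h1 h2
end

section
/- Let G be a group whose commutator subgroup G' = [G,G] is finite. Then for all g, h ∈ G there exists a positive integer n such that g·hⁿ = hⁿ·g; that is, G satisfies condition (2). -/
/-!
The commutators `⁅g, h ^ n⁆`, `n : ℕ`, all lie in the finite group `[G, G]`, so by pigeonhole
`⁅g, h ^ m⁆ = ⁅g, h ^ n⁆` for some `m < n`; equal commutators `⁅g, a⁆ = ⁅g, b⁆` mean that `g`
commutes with `a⁻¹ * b`, here `h ^ (n - m)`.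
-/

open scoped commutatorElement

theorem commutatorElement_eq_commutatorElement_iff_commute {G : Type*} [Group G] {g a b : G} :
    ⁅g, a⁆ = ⁅g, b⁆ ↔ Commute g (a⁻¹ * b) := by
  have hconj (x : G) : ⁅g, x⁆ = g * (x * g * x⁻¹)⁻¹ := by group
  rw [hconj, hconj, mul_right_inj, inv_inj, commute_iff_eq]
  constructor <;> intro h
  · calc g * (a⁻¹ * b) = a⁻¹ * (a * g * a⁻¹) * b := by group
      _ = a⁻¹ * b * g := by rw [h]; group
  · calc a * g * a⁻¹ = a * (g * (a⁻¹ * b)) * b⁻¹ := by group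
      _ = b * g * b⁻¹ := by rw [h]; group

theorem exists_pos_commute_pow_of_finite_range_commutatorElement {G : Type*} [Group G] {g h : G}
    (hfin : (Set.range fun n : ℕ => ⁅g, h ^ n⁆).Finite) : ∃ n, 0 < n ∧ Commute g (h ^ n) := by
  obtain ⟨m, n, hmn, heq⟩ := hfin.exists_lt_map_eq_of_forall_mem (Set.mem_range_self ·)
  refine ⟨n - m, Nat.sub_pos_of_lt hmn, ?_⟩
  rw [eq_inv_mul_of_mul_eq (pow_mul_pow_sub h hmn.le)]
  exact commutatorElement_eq_commutatorElement_iff_commute.mp heq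

theorem cond2_of_finite_commutator (G : Type*) [Group G]
    (hfin : Finite (commutator G)) :
    ∀ g h : G, ∃ n : ℕ, 0 < n ∧ g * h ^ n = h ^ n * g := by
  intro g h
  have hrange : (Set.range fun n : ℕ => ⁅g, h ^ n⁆) ⊆ commutator G := by
    rintro _ ⟨n, rfl⟩
    exact Subgroup.commutator_mem_commutator (Subgroup.mem_top g) (Subgroup.mem_top (h ^ n))
  exact exists_pos_commute_pow_of_finite_range_commutatorElement
    ((Set.toFinite (commutator G : Set G)).subset hrange)
end

section
/- Let G be a group whose commutator subgroup G' = [G,G] is finite. Then the quotient group G/Z(G) of G by its center is periodic, i.e., every element of G/Z(G) has finite order. -/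
/-!
Conjugation gives a homomorphism from `G` to the finite group `Aut G'`, so some power `h = g ^ m`
centralizes `G'`. Then every commutator `⁅h, x⁆` commutes with `h`, which makes `n ↦ ⁅h ^ n, x⁆`
multiplicative: `⁅h ^ n, x⁆ = ⁅h, x⁆ ^ n`. Taking `n = |G'|` kills the commutator, so `h ^ |G'|` is
central.
-/

open scoped commutatorElement

section

variable {G : Type*} [Group G]

theorem commutatorElement_pow_left_of_commute {h x : G} (hc : Commute h ⁅h, x⁆) (n : ℕ) :
    ⁅h ^ n, x⁆ = ⁅h, x⁆ ^ n := by
  induction n with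
  | zero => simp
  | succ n ih =>
    calc ⁅h ^ (n + 1), x⁆ = h * ⁅h ^ n, x⁆ * h⁻¹ * ⁅h, x⁆ := by
          simp only [commutatorElement_def]; group
      _ = ⁅h, x⁆ ^ (n + 1) := by
          rw [ih, (hc.pow_right n).eq, mul_inv_cancel_right, pow_succ]

theorem exists_pow_mem_centralizer_of_finite (H : Subgroup G) [H.Normal] [Finite H] (g : G) :
    ∃ n, 0 < n ∧ g ^ n ∈ Subgroup.centralizer (H : Set G) := by
  obtain ⟨n, hn, hconj⟩ :=
    (isOfFinOrder_of_finite (MulAut.conjNormal (H := H) g)).exists_pow_eq_one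
  refine ⟨n, hn, Subgroup.mem_centralizer_iff.2 fun y hy => ?_⟩
  have hfix : g ^ n * y * (g ^ n)⁻¹ = y := by
    have h := MulAut.conjNormal_apply (g ^ n) (⟨y, hy⟩ : H)
    rw [map_pow, hconj] at h
    exact h.symm
  rw [← hfix, inv_mul_cancel_right, hfix]

theorem pow_card_mem_center_of_mem_centralizer_commutator [Finite (commutator G)] {h : G}
    (hh : h ∈ Subgroup.centralizer (commutator G : Set G)) :
    h ^ Nat.card (commutator G) ∈ Subgroup.center G := by
  refine Subgroup.mem_center_iff.2 fun x => ?_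
  have hmem : ⁅h, x⁆ ∈ commutator G :=
    Subgroup.commutator_mem_commutator (Subgroup.mem_top h) (Subgroup.mem_top x)
  have hcard : ⁅h, x⁆ ^ Nat.card (commutator G) = 1 :=
    congrArg Subtype.val (pow_card_eq_one' (x := (⟨_, hmem⟩ : commutator G)))
  have hc : Commute h ⁅h, x⁆ := (Subgroup.mem_centralizer_iff.1 hh _ hmem).symm
  have hcomm : ⁅h ^ Nat.card (commutator G), x⁆ = 1 := by
    rw [commutatorElement_pow_left_of_commute hc, hcard]
  exact (commutatorElement_eq_one_iff_mul_comm.1 hcomm).symm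

end

theorem quotient_center_periodic_of_finite_commutator (G : Type*) [Group G]
    (hfin : Finite (commutator G)) :
    ∀ x : G ⧸ Subgroup.center G, IsOfFinOrder x := by
  intro x
  induction x using QuotientGroup.induction_on with
  | H g =>
    obtain ⟨m, hm, hgm⟩ := exists_pow_mem_centralizer_of_finite (commutator G) g
    refine isOfFinOrder_iff_pow_eq_one.2
      ⟨m * Nat.card (commutator G), Nat.mul_pos hm Nat.card_pos, ?_⟩
    rw [← QuotientGroup.mk_pow, QuotientGroup.eq_one_iff, pow_mul]
    exact pow_card_mem_center_of_mem_centralizer_commutator hgm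
end

section
/- Let G be a group whose commutator subgroup G' = [G,G] is finite of cardinality k (with k ≥ 1). Then the index of the centralizer C_G(G') of G' in G is at most k^(k−1). -/
/-!
Conjugation embeds `G ⧸ C_G(G')` into `MulAut G'`, and an automorphism of `G'` fixes `1`, so it is
determined by where it sends the other `k - 1` elements of `G'`.
-/

open Cardinal Subgroup

theorem MulAut.ker_conjNormal {G : Type*} [Group G] (N : Subgroup G) [N.Normal] :
    (MulAut.conjNormal : G →* MulAut N).ker = centralizer (N : Set G) := by
  ext g
  simp only [MonoidHom.mem_ker, mem_centralizer_iff, SetLike.mem_coe, MulEquiv.ext_iff,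
    MulAut.one_apply, Subtype.ext_iff, MulAut.conjNormal_apply, Subtype.forall]
  refine forall₂_congr fun h _ => ?_
  rw [mul_inv_eq_iff_eq_mul, eq_comm]

theorem Subgroup.mk_quotient_centralizer_le_mk_mulAut {G : Type*} [Group G] (N : Subgroup G)
    [N.Normal] : #(G ⧸ centralizer (N : Set G)) ≤ #(MulAut N) := by
  rw [← MulAut.ker_conjNormal]
  exact mk_le_of_injective (QuotientGroup.kerLift_injective _)

theorem Cardinal.mk_mulAut_le (M : Type*) [MulOneClass M] :
    #(MulAut M) ≤ #M ^ #{x : M // x ≠ 1} := by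
  rw [power_def]
  refine mk_le_of_injective (f := fun e x => e x) fun e₁ e₂ h => MulEquiv.ext fun x => ?_
  by_cases hx : x = 1
  · simp [hx]
  · exact congrFun h ⟨x, hx⟩

theorem Nat.card_subtype_ne {α : Type*} [Finite α] (a : α) :
    Nat.card {x : α // x ≠ a} = Nat.card α - 1 := by
  classical
  have := Fintype.ofFinite α
  simp only [Nat.card_eq_fintype_card, Fintype.card_subtype_compl, Fintype.card_subtype_eq]

theorem index_centralizer_commutator_le_general (G : Type*) [Group G] (k : ℕ)
    (hfin : Finite (commutator G)) (hcard : Nat.card (commutator G) = k) :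
    Cardinal.mk (G ⧸ Subgroup.centralizer (commutator G : Set G)) ≤ (k : Cardinal) ^ (k - 1) := by
  have hG' : #(commutator G) = k := by rw [← hcard, Nat.cast_card]
  have hne : #{x : commutator G // x ≠ 1} = ↑(k - 1) := by
    rw [← Nat.cast_card, Nat.card_subtype_ne, hcard]
  calc #(G ⧸ centralizer (commutator G : Set G)) ≤ #(MulAut (commutator G)) :=
        mk_quotient_centralizer_le_mk_mulAut _
    _ ≤ #(commutator G) ^ #{x : commutator G // x ≠ 1} := mk_mulAut_le _
    _ = (k : Cardinal) ^ (k - 1) := by rw [hG', hne, power_natCast]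

theorem index_centralizer_commutator_le (G : Type*) [Group G] (k : ℕ) (hk : 1 ≤ k)
    (hfin : Finite (commutator G)) (hcard : Nat.card (commutator G) = k) :
    Cardinal.mk (G ⧸ Subgroup.centralizer (commutator G : Set G)) ≤ (k : Cardinal) ^ (k - 1) :=
  index_centralizer_commutator_le_general G k hfin hcard
end

section
/- Let G be a finitely generated group. Then G satisfies condition (2) if and only if the quotient group G/Z(G) of G by its center is periodic (every element of G/Z(G) has finite order). -/
/-! If `h ^ f s` commutes with each generator `s` of a finite generating set `S`, then
`h ^ ∏ s ∈ S, f s` commutes with all of `S`, hence is central; conversely a central power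
of `h` commutes with every `g`. -/

open Subgroup

theorem QuotientGroup.isOfFinOrder_mk_iff {G : Type*} [Group G] {N : Subgroup G} [N.Normal]
    (g : G) : IsOfFinOrder (g : G ⧸ N) ↔ ∃ n : ℕ, 0 < n ∧ g ^ n ∈ N := by
  simp only [isOfFinOrder_iff_pow_eq_one, ← QuotientGroup.mk_pow, QuotientGroup.eq_one_iff]

theorem Subgroup.pow_mem_center_of_forall_commute_pow {G : Type*} [Group G] {S : Finset G}
    (hS : closure (S : Set G) = ⊤) {h : G} {f : G → ℕ}
    (hf : ∀ s ∈ S, Commute s (h ^ f s)) : h ^ ∏ s ∈ S, f s ∈ center G := by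
  rw [← centralizer_univ, ← coe_top, ← hS, centralizer_closure, mem_centralizer_iff]
  intro s hs
  obtain ⟨m, hm⟩ := Finset.dvd_prod_of_mem f hs
  rw [hm, pow_mul]
  exact ((hf s hs).pow_right m).eq

theorem Group.exists_pow_mem_center_of_forall_exists_commute_pow {G : Type*} [Group G]
    (hfg : Group.FG G) {h : G} (hc : ∀ g : G, ∃ n : ℕ, 0 < n ∧ Commute g (h ^ n)) :
    ∃ n : ℕ, 0 < n ∧ h ^ n ∈ center G := by
  obtain ⟨S, hS⟩ := hfg.out
  choose f hf_pos hf_comm using hc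
  exact ⟨∏ s ∈ S, f s, Finset.prod_pos fun s _ => hf_pos s,
    pow_mem_center_of_forall_commute_pow hS fun s _ => hf_comm s⟩

theorem cond2_iff_center_quotient_periodic_of_fg (G : Type*) [Group G]
    (hfg : Group.FG G) :
    (∀ g h : G, ∃ n : ℕ, 0 < n ∧ g * h ^ n = h ^ n * g) ↔
    (∀ x : G ⧸ Subgroup.center G, IsOfFinOrder x) := by
  refine ⟨fun hc x => ?_, fun hp g h => ?_⟩
  · obtain ⟨h, rfl⟩ := QuotientGroup.mk_surjective x
    exact (QuotientGroup.isOfFinOrder_mk_iff h).mpr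
      (Group.exists_pow_mem_center_of_forall_exists_commute_pow hfg (hc · h))
  · obtain ⟨n, hn, hcen⟩ := (QuotientGroup.isOfFinOrder_mk_iff h).mp (hp h)
    exact ⟨n, hn, mem_center_iff.mp hcen g⟩
end

section
/- There exists a group G satisfying condition (2) whose center is trivial and which contains an element of infinite order. (In particular, condition (2) does not imply that G/Z(G) is periodic.) -/
/-!
Take the restricted product of the dihedral groups `D (2i+3)`, `i ∈ ℕ`, with respect to their
rotation subgroups: the tuples that are rotations in all but finitely many coordinates. Each
factor has trivial centre, hence so does the product, and the tuple of generating rotations has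
order divisible by every `2i+3`, hence infinite. Given `g` and `h`, both are rotations, and so
commute, outside a finite set of coordinates; raising `h` to the product of its orders at those
coordinates kills it there.
-/

open Filter DihedralGroup
open scoped RestrictedProduct

namespace RestrictedProduct

variable {ι : Type*} {G S : ι → Type*} [∀ i, SetLike (S i) (G i)] {A : ∀ i, S i}

section Monoid

variable [∀ i, Monoid (G i)] [∀ i, SubmonoidClass (S i) (G i)]

lemma commute_iff {x y : Πʳ i, [G i, A i]} : Commute x y ↔ ∀ i, Commute (x i) (y i) :=
  ⟨fun h i => congrArg (fun z : Πʳ i, [G i, A i] => z i) h.eq, fun h => ext _ _ fun i => h i⟩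

theorem exists_pos_pow_commute [∀ i, IsMulCommutative (A i)] (htors : ∀ i, IsMulTorsion (G i))
    (g h : Πʳ i, [G i, A i]) : ∃ n : ℕ, 0 < n ∧ Commute g (h ^ n) := by
  have hfin : {i | g i ∉ A i ∨ h i ∉ A i}.Finite :=
    (eventually_cofinite.mp (g.2.and h.2)).subset fun _ => not_and_or.mpr
  refine ⟨∏ i ∈ hfin.toFinset, orderOf (h i),
    Finset.prod_pos fun i _ => (htors i (h i)).orderOf_pos, commute_iff.mpr fun i => ?_⟩
  change Commute (g i) (h i ^ _)
  by_cases hi : i ∈ hfin.toFinset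
  · rw [orderOf_dvd_iff_pow_eq_one.mp (Finset.dvd_prod_of_mem (fun i => orderOf (h i)) hi)]
    exact Commute.one_right _
  · obtain ⟨hg, hh⟩ : g i ∈ A i ∧ h i ∈ A i := by simpa using hi
    exact setLike_mul_comm hg (pow_mem hh _)

theorem not_isOfFinOrder_of_forall_exists_lt_orderOf (x : Πʳ i, [G i, A i])
    (hx : ∀ m, ∃ i, m < orderOf (x i)) : ¬IsOfFinOrder x := fun hfin => by
  obtain ⟨i, hi⟩ := hx (orderOf x)
  exact hi.not_ge (Nat.le_of_dvd hfin.orderOf_pos (orderOf_map_dvd (evalMonoidHom G i) x))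

end Monoid

theorem center_eq_bot [∀ i, Group (G i)] [∀ i, SubgroupClass (S i) (G i)]
    (hG : ∀ i, Subgroup.center (G i) = ⊥) : Subgroup.center (Πʳ i, [G i, A i]) = ⊥ := by
  classical
  refine (Subgroup.eq_bot_iff_forall _).mpr fun z hz => ext _ _ fun i => ?_
  refine (Subgroup.eq_bot_iff_forall _).mp (hG i) (z i) (Subgroup.mem_center_iff.mpr fun y => ?_)
  simpa using congrArg (fun w : Πʳ i, [G i, A i] => w i)
    (Subgroup.mem_center_iff.mp hz (mulSingle A i y))

end RestrictedProduct

open RestrictedProduct in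
theorem exists_cond2_trivial_center_infinite_order :
    ∃ (G : Type) (_ : Group G),
      (∀ g h : G, ∃ n : ℕ, 0 < n ∧ g * h ^ n = h ^ n * g) ∧
      Subgroup.center G = ⊥ ∧
      ∃ g : G, ¬ IsOfFinOrder g := by
  let rot : Πʳ i : ℕ,
      [DihedralGroup (2 * i + 3), Subgroup.zpowers (r 1 : DihedralGroup (2 * i + 3))] :=
    ⟨fun _ => r 1, .of_forall fun _ => Subgroup.mem_zpowers _⟩
  have hrot : ¬IsOfFinOrder rot := not_isOfFinOrder_of_forall_exists_lt_orderOf rot fun m =>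
    ⟨m, by rw [show orderOf (rot m) = 2 * m + 3 from orderOf_r_one]; omega⟩
  refine ⟨_, inferInstance, exists_pos_pow_commute fun _ => isMulTorsion_of_finite,
    center_eq_bot fun i => center_eq_bot_of_odd_ne_one (n := 2 * i + 3) ⟨i + 1, by ring⟩ (by omega),
    rot, hrot⟩
end

section
/- Let 𝒟 be the subgroup of the direct product ∏_{n∈ℕ} D_{2n+3} of dihedral groups consisting of all sequences whose coordinates are rotations for all but finitely many n. Then the center of 𝒟 is trivial. -/
/-- The subgroup `𝒟` of `∏ n, D_{2n+3}` of sequences whose coordinates are rotations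
for all but finitely many `n`. -/
def scriptD : Subgroup (∀ n : ℕ, DihedralGroup (2 * n + 3)) where
  carrier := {f | {n : ℕ | ¬ ∃ i, f n = DihedralGroup.r i}.Finite}
  one_mem' := by
    apply Set.finite_empty.subset
    intro n hn
    exact hn ⟨0, DihedralGroup.one_def⟩
  mul_mem' := by
    intro f g hf hg
    apply (Set.Finite.union hf hg).subset
    intro n hn
    simp only [Set.mem_union, Set.mem_setOf_eq] at *
    by_contra hc
    rw [not_or, not_not, not_not] at hc
    obtain ⟨⟨i, hi⟩, ⟨j, hj⟩⟩ := hc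
    exact hn ⟨i + j, by rw [Pi.mul_apply, hi, hj, DihedralGroup.r_mul_r]⟩
  inv_mem' := by
    intro f hf
    apply hf.subset
    intro n hn
    simp only [Set.mem_setOf_eq] at *
    by_contra hc
    obtain ⟨i, hi⟩ := hc
    refine hn ⟨-i, ?_⟩
    rw [Pi.inv_apply, hi]
    rw [inv_eq_iff_mul_eq_one, DihedralGroup.r_mul_r, add_neg_cancel, DihedralGroup.one_def]

/- Each coordinate of a central element commutes with everything placed in that single
coordinate, and `D_{2n+3}` has trivial center since `2n+3` is odd and at least `3`. -/

namespace Subgroup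

variable {ι : Type*} {G : ι → Type*} [∀ i, Group (G i)] [DecidableEq ι]
  {H : Subgroup (∀ i, G i)}

theorem apply_mem_center_of_mulSingle_mem (hH : ∀ i (a : G i), Pi.mulSingle i a ∈ H)
    {z : H} (hz : z ∈ center H) (i : ι) : (z : ∀ i, G i) i ∈ center (G i) := by
  rw [mem_center_iff] at hz ⊢
  intro g
  simpa using congrFun (congrArg Subtype.val (hz ⟨Pi.mulSingle i g, hH i g⟩)) i

theorem center_eq_bot_of_mulSingle_mem (hH : ∀ i (a : G i), Pi.mulSingle i a ∈ H)
    (hG : ∀ i, center (G i) = ⊥) : center H = ⊥ := by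
  refine (eq_bot_iff_forall _).2 fun z hz => Subtype.ext (funext fun i => ?_)
  simpa [hG i] using apply_mem_center_of_mulSingle_mem hH hz i

end Subgroup

theorem mulSingle_mem_scriptD (n : ℕ) (a : DihedralGroup (2 * n + 3)) :
    Pi.mulSingle n a ∈ scriptD := by
  refine (Set.finite_singleton n).subset fun k hk => ?_
  by_contra hkn
  exact hk ⟨0, by rw [Pi.mulSingle_eq_of_ne hkn, DihedralGroup.r_zero]⟩

theorem center_scriptD_trivial : Subgroup.center scriptD = ⊥ :=
  Subgroup.center_eq_bot_of_mulSingle_mem mulSingle_mem_scriptD fun n =>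
    DihedralGroup.center_eq_bot_of_odd_ne_one ⟨n + 1, by ring⟩ (by omega)
end

section
/- Let 𝒟 be the subgroup of the direct product ∏_{n∈ℕ} D_{2n+3} of dihedral groups consisting of all sequences whose coordinates are rotations for all but finitely many n. Then 𝒟 satisfies condition (2): for all g, h ∈ 𝒟 there exists a positive integer n with g·hⁿ = hⁿ·g. -/
/-! Let `S` be the finite set of coordinates where `g` is a reflection and take
`N = 2 ∏_{k ∈ S} (2k+3)`. On `S` the power `hᴺ` is trivial, since the exponent of `D_m` divides `2m`;
off `S` the coordinate of `g` is a rotation, and so is every even power of an element of `D_m`. -/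

namespace DihedralGroup

variable {n : ℕ}

lemma commute_r_r (i j : ZMod n) : Commute (r i) (r j) := by
  simp only [Commute, SemiconjBy, r_mul_r, add_comm]

lemma exists_sq_eq_r : ∀ x : DihedralGroup n, ∃ i, x ^ 2 = r i
  | r i => ⟨i + i, by rw [sq, r_mul_r]⟩
  | sr j => ⟨0, by rw [sq, sr_mul_self, one_def]⟩

lemma commute_r_pow_of_even (i : ZMod n) (x : DihedralGroup n) {N : ℕ} (hN : Even N) :
    Commute (r i) (x ^ N) := by
  obtain ⟨k, rfl⟩ := hN
  obtain ⟨j, hj⟩ := exists_sq_eq_r x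
  rw [← two_mul, pow_mul, hj, r_pow]
  exact commute_r_r _ _

lemma pow_eq_one_of_dvd (x : DihedralGroup n) {N : ℕ} (hn : n ∣ N) (h2 : 2 ∣ N) : x ^ N = 1 :=
  Monoid.exponent_dvd_iff_forall_pow_eq_one.mp (exponent ▸ lcm_dvd hn h2) x

end DihedralGroup

open DihedralGroup in
theorem scriptD_cond2 :
    ∀ g h : scriptD, ∃ n : ℕ, 0 < n ∧ g * h ^ n = h ^ n * g := by
  intro g h
  have hS : {n : ℕ | ¬ ∃ i, (g : ∀ n : ℕ, DihedralGroup (2 * n + 3)) n = r i}.Finite := g.2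
  refine ⟨2 * ∏ k ∈ hS.toFinset, (2 * k + 3), by positivity, Subtype.ext (funext fun k => ?_)⟩
  simp only [Subgroup.coe_mul, SubgroupClass.coe_pow, Pi.mul_apply, Pi.pow_apply]
  by_cases hk : ∃ i, (g : ∀ n : ℕ, DihedralGroup (2 * n + 3)) k = r i
  · obtain ⟨i, hi⟩ := hk
    rw [hi]
    exact commute_r_pow_of_even i _ (even_two_mul _)
  · have hdvd : 2 * k + 3 ∣ ∏ k ∈ hS.toFinset, (2 * k + 3) :=
      Finset.dvd_prod_of_mem _ (hS.mem_toFinset.mpr hk)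
    rw [pow_eq_one_of_dvd _ (hdvd.mul_left 2) (dvd_mul_right 2 _), mul_one, one_mul]
end

section
/- Let k be a field and set x = [[t,0],[0,0]], y = [[0,0],[0,t]], z = [[0,1],[1,0]] in the matrix ring M₂(k[t]). Then the k-subalgebra of M₂(k[t]) generated by {x, y, z} equals the subring R = { [[a(t), b(t)], [c(t), d(t)]] ∈ M₂(k[t]) : a(0) = d(0) and b(0) = c(0) }. -/
/-!
Write `J` for the swap matrix. The set on the right is the preimage, under evaluation at `t = 0`,
of the centralizer `k·1 + k·J` of `J` in `M₂(k)`, hence a subalgebra; it contains `x`, `y`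
(which vanish at `0`) and `z` (which evaluates to `J`). Conversely, `x * z` and `z * x` are `t`
in the off-diagonal positions, so together with powers of `x` and `y` the algebra contains every
matrix divisible by `t`; and a matrix `A` of the right-hand side differs from
`a(0)·1 + b(0)·z` by such a matrix.
-/

open Polynomial Matrix

namespace Matrix

variable {R : Type*} [CommRing R]

def swapMatrix (R : Type*) [Zero R] [One R] : Matrix (Fin 2) (Fin 2) R := of ![![0, 1], ![1, 0]]

theorem swapMatrix_eq_single_add_single : swapMatrix R = single 0 1 1 + single 1 0 1 := by
  ext i j; fin_cases i <;> fin_cases j <;> simp [swapMatrix]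

theorem map_swapMatrix {S : Type*} [CommRing S] (f : R →+* S) :
    (swapMatrix R).map f = swapMatrix S := by
  ext i j; fin_cases i <;> fin_cases j <;> simp [swapMatrix]

theorem commute_swapMatrix_iff {M : Matrix (Fin 2) (Fin 2) R} :
    Commute M (swapMatrix R) ↔ M 0 0 = M 1 1 ∧ M 0 1 = M 1 0 := by
  rw [commute_iff_eq, ← Matrix.ext_iff]
  simp only [swapMatrix, mul_apply, of_apply, cons_val', cons_val_fin_one, Fin.sum_univ_two,
    cons_val_zero, cons_val_one, Fin.forall_fin_two, mul_zero, mul_one, zero_add, add_zero,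
    zero_mul, one_mul]
  exact ⟨fun ⟨⟨h01, h00⟩, _⟩ => ⟨h00, h01⟩,
    fun ⟨h00, h01⟩ => ⟨⟨h01, h00⟩, h00.symm, h01.symm⟩⟩

theorem eq_smul_one_add_smul_swapMatrix {M : Matrix (Fin 2) (Fin 2) R}
    (hM : Commute M (swapMatrix R)) : M = M 0 0 • 1 + M 0 1 • swapMatrix R := by
  obtain ⟨h00, h01⟩ := commute_swapMatrix_iff.mp hM
  ext i j; fin_cases i <;> fin_cases j <;> simp [swapMatrix, h00, h01]

theorem mem_comap_centralizer_swapMatrix_iff {A : Matrix (Fin 2) (Fin 2) R[X]} :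
    A ∈ (Subalgebra.centralizer R {swapMatrix R}).comap (aeval (0 : R)).mapMatrix ↔
      Commute (A.map (eval 0)) (swapMatrix R) := by
  simp [Subalgebra.mem_centralizer_iff, Commute, SemiconjBy, eq_comm]

variable {n : Type*} [Fintype n] [DecidableEq n] {S : Subalgebra R (Matrix n n R[X])}

theorem single_X_mul_mem (hS : ∀ i j, single i j (X : R[X]) ∈ S) (i j : n) (p : R[X]) :
    single i j (X * p) ∈ S := by
  induction p using Polynomial.induction_on' with
  | add p q hp hq => rw [mul_add, single_add]; exact add_mem hp hq
  | monomial m a =>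
    have hpow : single i j ((X : R[X]) ^ (m + 1)) ∈ S := by
      induction m with
      | zero => simpa using hS i j
      | succ m ih => simpa [pow_succ'] using S.mul_mem (hS i i) ih
    simpa [← C_mul_X_pow_eq_monomial, pow_succ', mul_left_comm X (C a), ← smul_eq_C_mul]
      using S.smul_mem hpow a

theorem mem_of_map_eval_zero_eq_zero (hS : ∀ i j, single i j (X : R[X]) ∈ S)
    {A : Matrix n n R[X]} (hA : A.map (eval 0) = 0) : A ∈ S := by
  rw [matrix_eq_sum_single A]
  refine S.sum_mem fun i _ => S.sum_mem fun j _ => ?_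
  obtain ⟨p, hp⟩ : X ∣ A i j := by
    rw [X_dvd_iff, coeff_zero_eq_eval_zero]; exact congrFun (congrFun hA i) j
  rw [hp]
  exact single_X_mul_mem hS i j p

end Matrix

section

variable (R : Type*) [CommRing R]

theorem single_X_mem_adjoin_single_X_swapMatrix (i j : Fin 2) :
    single i j (X : R[X]) ∈ Algebra.adjoin R {single 0 0 X, single 1 1 X, swapMatrix R[X]} := by
  set S := Algebra.adjoin R {single 0 0 (X : R[X]), single 1 1 X, swapMatrix R[X]}
  have h00 : single 0 0 (X : R[X]) ∈ S := Algebra.subset_adjoin (by simp)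
  have h11 : single 1 1 (X : R[X]) ∈ S := Algebra.subset_adjoin (by simp)
  have hJ : swapMatrix R[X] ∈ S := Algebra.subset_adjoin (by simp)
  have h01 := S.mul_mem h00 hJ
  have h10 := S.mul_mem hJ h00
  simp only [swapMatrix_eq_single_add_single, mul_add, add_mul, single_mul_single_same,
    single_mul_single_of_ne, ne_eq, zero_ne_one, one_ne_zero, not_false_eq_true, mul_one, one_mul,
    add_zero, zero_add] at h01 h10
  fin_cases i <;> fin_cases j <;> assumption

theorem adjoin_single_X_swapMatrix_le_comap_centralizer :
    Algebra.adjoin R {single 0 0 (X : R[X]), single 1 1 X, swapMatrix R[X]} ≤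
      (Subalgebra.centralizer R {swapMatrix R}).comap (aeval (0 : R)).mapMatrix := by
  rw [Algebra.adjoin_le_iff]
  rintro _ (rfl | rfl | rfl) <;>
    rw [SetLike.mem_coe, mem_comap_centralizer_swapMatrix_iff, ← coe_evalRingHom]
  · rw [map_single]; simp
  · rw [map_single]; simp
  · rw [map_swapMatrix]

theorem comap_centralizer_le_adjoin_single_X_swapMatrix :
    (Subalgebra.centralizer R {swapMatrix R}).comap (aeval (0 : R)).mapMatrix ≤
      Algebra.adjoin R {single 0 0 (X : R[X]), single 1 1 X, swapMatrix R[X]} := by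
  set S := Algebra.adjoin R {single 0 0 (X : R[X]), single 1 1 X, swapMatrix R[X]}
  set φ := (aeval (R := R) (0 : R)).mapMatrix (m := Fin 2)
  intro A hA
  replace hA : Commute (φ A) (swapMatrix R) := mem_comap_centralizer_swapMatrix_iff.mp hA
  have hJ : swapMatrix R[X] ∈ S := Algebra.subset_adjoin (by simp)
  have hφJ : φ (swapMatrix R[X]) = swapMatrix R := map_swapMatrix (evalRingHom (0 : R))
  have hB : A - (φ A 0 0 • 1 + φ A 0 1 • swapMatrix R[X]) ∈ S := by
    refine mem_of_map_eval_zero_eq_zero (single_X_mem_adjoin_single_X_swapMatrix R) ?_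
    change φ _ = 0
    rw [map_sub, map_add, map_smul, map_smul, map_one, hφJ,
      ← eq_smul_one_add_smul_swapMatrix hA, sub_self]
  simpa using add_mem hB (add_mem (S.smul_mem S.one_mem (φ A 0 0)) (S.smul_mem hJ (φ A 0 1)))

theorem adjoin_single_X_swapMatrix_eq_comap_centralizer :
    Algebra.adjoin R {single 0 0 (X : R[X]), single 1 1 X, swapMatrix R[X]} =
      (Subalgebra.centralizer R {swapMatrix R}).comap (aeval (0 : R)).mapMatrix :=
  le_antisymm (adjoin_single_X_swapMatrix_le_comap_centralizer R)
    (comap_centralizer_le_adjoin_single_X_swapMatrix R)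

end

theorem adjoin_xyz_eq_bazhenov (k : Type*) [Field k] :
    (Algebra.adjoin k
        ({Matrix.of ![![(X : k[X]), 0], ![0, 0]],
          Matrix.of ![![(0 : k[X]), 0], ![0, X]],
          Matrix.of ![![(0 : k[X]), 1], ![1, 0]]} :
          Set (Matrix (Fin 2) (Fin 2) k[X])) : Set (Matrix (Fin 2) (Fin 2) k[X])) =
    {A : Matrix (Fin 2) (Fin 2) k[X] |
      (A 0 0).eval 0 = (A 1 1).eval 0 ∧ (A 0 1).eval 0 = (A 1 0).eval 0} := by
  have hx : Matrix.of ![![(X : k[X]), 0], ![0, 0]] = single 0 0 X := by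
    ext i j; fin_cases i <;> fin_cases j <;> rfl
  have hy : Matrix.of ![![(0 : k[X]), 0], ![0, X]] = single 1 1 X := by
    ext i j; fin_cases i <;> fin_cases j <;> rfl
  rw [hx, hy, show Matrix.of ![![(0 : k[X]), 1], ![1, 0]] = swapMatrix k[X] from rfl,
    adjoin_single_X_swapMatrix_eq_comap_centralizer]
  ext A
  rw [SetLike.mem_coe, mem_comap_centralizer_swapMatrix_iff, commute_swapMatrix_iff]
  rfl
end
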